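/- Write $p = \sup_{u \in \Omega} \dim_P F_u$ for a RIFS of bi-Lipschitz contractions, and suppose there exists $v = (v_1, v_2, \dots) \in \Omega$ with $\lim_{k\to\infty} \sum_{j_1 \in \mathcal{I}_{v_1}, \dots, j_k \in \mathcal{I}_{v_k}} \mathrm{Lip}^+(S_{v_1,j_1} \circ \cdots \circ S_{v_k,j_k})^p = 0$, and that $\sup_{u \in \Omega} \mathcal{P}^p(F_u) < \infty$. Then the set $\{\omega \in \Omega : \mathcal{P}^p(F_\omega) = 0\}$ is residual in $(\Omega, d_\Omega)$. -/

import Mathlib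

open Metric MeasureTheory Filter Set
open scoped ENNReal NNReal

noncomputable def ratioSet {K : Type*} [MetricSpace K] (φ : K → K) : Set ℝ :=
  {r | ∃ x y : K, x ≠ y ∧ r = dist (φ x) (φ y) / dist x y}

/-- `Lip⁻(φ) = inf_{x ≠ y} d(φx,φy)/d(x,y)`. -/
noncomputable def lipMinus {K : Type*} [MetricSpace K] (φ : K → K) : ℝ := sInf (ratioSet φ)

/-- `Lip⁺(φ) = sup_{x ≠ y} d(φx,φy)/d(x,y)`. -/
noncomputable def lipPlus {K : Type*} [MetricSpace K] (φ : K → K) : ℝ := sSup (ratioSet φ)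

/-- `φ` is bi-Lipschitz: `0 < Lip⁻(φ)` and `Lip⁺(φ) < ∞`. -/
def BiLipschitzMap {K : Type*} [MetricSpace K] (φ : K → K) : Prop :=
  0 < lipMinus φ ∧ BddAbove (ratioSet φ)

/-- Packing pre-measure with respect to the gauge `G` (applied to the diameters `2r`
of the balls of a countable centred `δ`-packing), as `δ → 0`. -/
noncomputable def packingPre {K : Type*} [MetricSpace K] (G : ℝ → ℝ) (F : Set K) : ℝ≥0∞ :=
  ⨅ (δ : ℝ) (_ : 0 < δ),
    ⨆ (s : Set ℕ) (c : ℕ → K) (r : ℕ → ℝ)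
      (_ : ∀ n ∈ s, c n ∈ F ∧ 0 < r n ∧ 2 * r n ≤ δ)
      (_ : s.PairwiseDisjoint fun n => Metric.closedBall (c n) (r n)),
      ∑' n : s, ENNReal.ofReal (G (2 * r n))

/-- Packing measure with respect to the gauge `G`. -/
noncomputable def packingMeasure {K : Type*} [MetricSpace K] (G : ℝ → ℝ) (F : Set K) : ℝ≥0∞ :=
  ⨅ (E : ℕ → Set K) (_ : F ⊆ ⋃ n, E n), ∑' n, packingPre G (E n)

/-- Packing dimension, defined from the packing measures `𝒫^s`. -/
noncomputable def packingDim {K : Type*} [MetricSpace K] (F : Set K) : ℝ≥0∞ :=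
  ⨆ (s : ℝ) (_ : 0 ≤ s) (_ : packingMeasure (fun t => t ^ s) F = ⊤), ENNReal.ofReal s

/-- The level-`k` approximation of the random attractor: the union over all length-`k`
words `(i₁,…,i_k)` with `i_l ∈ 𝓘_{ω_l}` of `S_{ω₁,i₁} ∘ ⋯ ∘ S_{ω_k,i_k}(K₀)`. -/
def levelSets {X : Type*} {N : ℕ} (m : Fin N → ℕ) (S : ∀ i, Fin (m i) → X → X) (K₀ : Set X) :
    (ℕ → Fin N) → ℕ → Set X
  | _, 0 => K₀
  | ω, k+1 => ⋃ j : Fin (m (ω 0)), S (ω 0) j '' levelSets m S K₀ (fun n => ω (n+1)) k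

/-- The random attractor `F_ω = ⋂_k ⋃_{i₁,…,i_k} S_{ω₁,i₁} ∘ ⋯ ∘ S_{ω_k,i_k}(K₀)`. -/
def attractorOf {X : Type*} {N : ℕ} (m : Fin N → ℕ) (S : ∀ i, Fin (m i) → X → X)
    (K₀ : Set X) (ω : ℕ → Fin N) : Set X :=
  ⋂ k, levelSets m S K₀ ω k

/-- `φ` is a bi-Lipschitz contraction. -/
def IsBiLipContraction {K : Type*} [MetricSpace K] (φ : K → K) : Prop :=
  ∃ c C : ℝ, 0 < c ∧ C < 1 ∧
    ∀ x y, c * dist x y ≤ dist (φ x) (φ y) ∧ dist (φ x) (φ y) ≤ C * dist x y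

/-- The composition `S_{ω₁,j₁} ∘ ⋯ ∘ S_{ω_k,j_k}` associated to a word `j` of length `k`. -/
def wordMap {X : Type*} {N : ℕ} (m : Fin N → ℕ) (S : ∀ i, Fin (m i) → X → X) :
    (ω : ℕ → Fin N) → (k : ℕ) → (∀ l : Fin k, Fin (m (ω l))) → X → X
  | _, 0, _ => id
  | ω, k+1, j => S (ω 0) (j 0) ∘ wordMap m S (fun n => ω (n+1)) k (fun l => j l.succ)


/-!
Covering `F_ω` by the images of `F_{σᵏω}` under the words of length `k`, and scaling packing
measure by `Lip⁺ ^ p` under each word, gives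
`𝒫^p(F_ω) ≤ (∑_{|j| = k} Lip⁺(S_j)^p) 𝒫^p(F_{σᵏω})`.
Applied to a sequence that starts with an arbitrary prefix of length `n` and then follows `v` for
`k` letters, this bounds `𝒫^p(F_ω)` by the prefix sum times the `v`-sum of length `k` times
`sup_u 𝒫^p(F_u)`. The middle factor tends to `0`, so for each `ε > 0` the sequences with this
bound below `ε` form an open dense set, and the intersection of these sets over `ε = 1/q` lies in
`{ω | 𝒫^p(F_ω) = 0}`. Here `p > 0`, since for `p = 0` the `v`-sums are at least `1`; this
also handles words with `Lip⁺ = 0`, which collapse every set to a point.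
-/

open Topology

section LipPlus

variable {K : Type*} [MetricSpace K] {φ : K → K}

theorem lipPlus_nonneg (φ : K → K) : 0 ≤ lipPlus φ :=
  Real.sSup_nonneg fun _ ⟨_, _, _, hr⟩ => hr ▸ by positivity

theorem LipschitzWith.bddAbove_ratioSet {L : ℝ≥0} (hφ : LipschitzWith L φ) :
    BddAbove (ratioSet φ) := by
  refine ⟨L, fun _ ⟨x, y, hxy, hr⟩ => hr ▸ ?_⟩
  exact div_le_of_le_mul₀ dist_nonneg L.2 (hφ.dist_le_mul x y)

theorem LipschitzWith.dist_le_lipPlus_mul {L : ℝ≥0} (hφ : LipschitzWith L φ) (x y : K) :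
    dist (φ x) (φ y) ≤ lipPlus φ * dist x y := by
  rcases eq_or_ne x y with rfl | hxy
  · simp
  · have hr : dist (φ x) (φ y) / dist x y ≤ lipPlus φ :=
      le_csSup hφ.bddAbove_ratioSet ⟨x, y, hxy, rfl⟩
    rwa [div_le_iff₀ (dist_pos.2 hxy)] at hr

theorem IsBiLipContraction.lipschitzWith_one (hφ : IsBiLipContraction φ) :
    LipschitzWith 1 φ := by
  obtain ⟨c, C, -, hC, hφ⟩ := hφ
  refine LipschitzWith.of_dist_le_mul fun x y => ?_
  calc dist (φ x) (φ y) ≤ C * dist x y := (hφ x y).2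
    _ ≤ 1 * dist x y := by gcongr

theorem IsBiLipContraction.injective (hφ : IsBiLipContraction φ) : Function.Injective φ := by
  obtain ⟨c, C, hc, -, hφ⟩ := hφ
  intro x y hxy
  have h := (hφ x y).1
  rw [hxy, dist_self] at h
  exact dist_le_zero.1 (nonpos_of_mul_nonpos_right h hc)

end LipPlus

section Packing

variable {K : Type*} [MetricSpace K] {G : ℝ → ℝ}

noncomputable def packingSup (G : ℝ → ℝ) (F : Set K) (δ : ℝ) : ℝ≥0∞ :=
  ⨆ (s : Set ℕ) (c : ℕ → K) (r : ℕ → ℝ)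
      (_ : ∀ n ∈ s, c n ∈ F ∧ 0 < r n ∧ 2 * r n ≤ δ)
      (_ : s.PairwiseDisjoint fun n => Metric.closedBall (c n) (r n)),
      ∑' n : s, ENNReal.ofReal (G (2 * r n))

theorem packingPre_eq_iInf_packingSup (F : Set K) :
    packingPre G F = ⨅ (δ : ℝ) (_ : 0 < δ), packingSup G F δ := rfl

theorem packingPre_le_packingSup (F : Set K) {δ : ℝ} (hδ : 0 < δ) :
    packingPre G F ≤ packingSup G F δ :=
  iInf₂_le δ hδ

theorem packingSup_le_iff {F : Set K} {δ : ℝ} {a : ℝ≥0∞} :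
    packingSup G F δ ≤ a ↔ ∀ (s : Set ℕ) (c : ℕ → K) (r : ℕ → ℝ),
      (∀ n ∈ s, c n ∈ F ∧ 0 < r n ∧ 2 * r n ≤ δ) →
      s.PairwiseDisjoint (fun n => Metric.closedBall (c n) (r n)) →
      ∑' n : s, ENNReal.ofReal (G (2 * r n)) ≤ a := by
  simp only [packingSup, iSup_le_iff]

theorem le_packingSup {F : Set K} {δ : ℝ} {s : Set ℕ} {c : ℕ → K} {r : ℕ → ℝ}
    (hpack : ∀ n ∈ s, c n ∈ F ∧ 0 < r n ∧ 2 * r n ≤ δ)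
    (hdisj : s.PairwiseDisjoint fun n => Metric.closedBall (c n) (r n)) :
    ∑' n : s, ENNReal.ofReal (G (2 * r n)) ≤ packingSup G F δ :=
  packingSup_le_iff.1 le_rfl s c r hpack hdisj

theorem packingPre_empty : packingPre G (∅ : Set K) = 0 := by
  refine le_antisymm ((packingPre_le_packingSup _ one_pos).trans ?_) zero_le
  refine packingSup_le_iff.2 fun s c r hpack _ => ?_
  have hs : s = ∅ := Set.eq_empty_of_forall_notMem fun n hn => (hpack n hn).1
  subst hs
  simp

noncomputable def packingOuterMeasure (G : ℝ → ℝ) : OuterMeasure K :=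
  OuterMeasure.ofFunction (packingPre G) packingPre_empty

theorem packingOuterMeasure_apply (G : ℝ → ℝ) (F : Set K) :
    packingOuterMeasure G F = packingMeasure G F :=
  OuterMeasure.ofFunction_apply _ _ _

theorem packingMeasure_mono {A B : Set K} (h : A ⊆ B) :
    packingMeasure G A ≤ packingMeasure G B := by
  simpa only [← packingOuterMeasure_apply] using measure_mono h

theorem packingMeasure_iUnion_le {ι : Type*} [Fintype ι] (A : ι → Set K) :
    packingMeasure G (⋃ i, A i) ≤ ∑ i, packingMeasure G (A i) := by
  simpa only [← packingOuterMeasure_apply] using measure_iUnion_fintype_le _ A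

theorem packingMeasure_le_packingPre (F : Set K) : packingMeasure G F ≤ packingPre G F := by
  rw [← packingOuterMeasure_apply]
  exact OuterMeasure.ofFunction_le F

variable {p : ℝ}

/-- A packing of `φ '' A` by balls of radii `r n` pulls back to a packing of `A` by balls of
radii `r n / L` centred at preimages of the centres. -/
theorem packingSup_rpow_image_le {φ : K → K} {L : ℝ} (hL : 0 < L)
    (hφ : ∀ x y, dist (φ x) (φ y) ≤ L * dist x y) (A : Set K) (δ : ℝ) :
    packingSup (· ^ p) (φ '' A) (L * δ) ≤
      ENNReal.ofReal (L ^ p) * packingSup (· ^ p) A δ := by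
  refine packingSup_le_iff.2 fun s c r hpack hdisj => ?_
  have hpre : ∀ n, ∃ x, n ∈ s → x ∈ A ∧ φ x = c n := fun n => by
    by_cases hn : n ∈ s
    · exact (hpack n hn).1.imp fun x hx _ => hx
    · exact ⟨c n, (absurd · hn)⟩
  choose a ha using hpre
  have haA n hn : a n ∈ A := (ha n hn).1
  have hac n hn : φ (a n) = c n := (ha n hn).2
  have hpack' : ∀ n ∈ s, a n ∈ A ∧ 0 < r n / L ∧ 2 * (r n / L) ≤ δ := fun n hn =>
    ⟨haA n hn, div_pos (hpack n hn).2.1 hL, by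
      rw [← mul_div_assoc, div_le_iff₀' hL]; exact (hpack n hn).2.2⟩
  have hball : ∀ n ∈ s,
      φ '' Metric.closedBall (a n) (r n / L) ⊆ Metric.closedBall (c n) (r n) := by
    rintro n hn _ ⟨z, hz, rfl⟩
    rw [Metric.mem_closedBall] at hz ⊢
    calc dist (φ z) (c n) = dist (φ z) (φ (a n)) := by rw [hac n hn]
      _ ≤ L * (r n / L) := (hφ _ _).trans (by gcongr)
      _ = r n := mul_div_cancel₀ _ hL.ne'
  have hdisj' : s.PairwiseDisjoint fun n => Metric.closedBall (a n) (r n / L) :=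
    fun n hn n' hn' hne => Disjoint.of_image <|
      (hdisj hn hn' hne).mono (hball n hn) (hball n' hn')
  calc ∑' n : s, ENNReal.ofReal ((2 * r n) ^ p)
      = ∑' n : s, ENNReal.ofReal (L ^ p) * ENNReal.ofReal ((2 * (r n / L)) ^ p) := by
        refine tsum_congr fun n => ?_
        have hr : 0 ≤ 2 * (r n / L) := (mul_pos two_pos (hpack' n n.2).2.1).le
        rw [← ENNReal.ofReal_mul (by positivity), ← Real.mul_rpow hL.le hr, mul_left_comm,
          mul_div_cancel₀ _ hL.ne']
    _ = ENNReal.ofReal (L ^ p) * ∑' n : s, ENNReal.ofReal ((2 * (r n / L)) ^ p) :=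
        ENNReal.tsum_mul_left
    _ ≤ ENNReal.ofReal (L ^ p) * packingSup (· ^ p) A δ := by
        gcongr
        exact le_packingSup hpack' hdisj'

theorem packingPre_rpow_image_le {φ : K → K} {L : ℝ} (hL : 0 < L)
    (hφ : ∀ x y, dist (φ x) (φ y) ≤ L * dist x y) (A : Set K) :
    packingPre (· ^ p) (φ '' A) ≤ ENNReal.ofReal (L ^ p) * packingPre (· ^ p) A := by
  have hc : ENNReal.ofReal (L ^ p) ≠ 0 := by positivity
  rw [packingPre_eq_iInf_packingSup A, ENNReal.mul_iInf_of_ne hc ENNReal.ofReal_ne_top]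
  refine le_iInf fun δ => ?_
  rw [ENNReal.mul_iInf_of_ne hc ENNReal.ofReal_ne_top]
  refine le_iInf fun hδ => ?_
  exact (packingPre_le_packingSup _ (mul_pos hL hδ)).trans (packingSup_rpow_image_le hL hφ A δ)

theorem packingMeasure_rpow_image_le_of_pos {φ : K → K} {L : ℝ} (hL : 0 < L)
    (hφ : ∀ x y, dist (φ x) (φ y) ≤ L * dist x y) (A : Set K) :
    packingMeasure (· ^ p) (φ '' A) ≤ ENNReal.ofReal (L ^ p) * packingMeasure (· ^ p) A := by
  have hc : ENNReal.ofReal (L ^ p) ≠ 0 := by positivity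
  rw [← packingOuterMeasure_apply, ← packingOuterMeasure_apply, packingOuterMeasure,
    OuterMeasure.ofFunction_apply, OuterMeasure.ofFunction_apply,
    ENNReal.mul_iInf_of_ne hc ENNReal.ofReal_ne_top]
  refine le_iInf fun E => ?_
  rw [ENNReal.mul_iInf_of_ne hc ENNReal.ofReal_ne_top]
  refine le_iInf fun hE => ?_
  calc ⨅ (E' : ℕ → Set K) (_ : φ '' A ⊆ ⋃ n, E' n), ∑' n, packingPre (· ^ p) (E' n)
      ≤ ∑' n, packingPre (· ^ p) (φ '' E n) :=
        iInf₂_le (fun n => φ '' E n) ((Set.image_mono hE).trans (Set.image_iUnion.le))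
    _ ≤ ∑' n, ENNReal.ofReal (L ^ p) * packingPre (· ^ p) (E n) :=
        ENNReal.tsum_le_tsum fun n => packingPre_rpow_image_le hL hφ (E n)
    _ = ENNReal.ofReal (L ^ p) * ∑' n, packingPre (· ^ p) (E n) := ENNReal.tsum_mul_left

/-- Distinct balls of a packing have distinct centres, so a packing centred in a subsingleton
has at most one ball. -/
theorem packingSup_rpow_le_of_subsingleton (hp : 0 ≤ p) {F : Set K} (hF : F.Subsingleton)
    (δ : ℝ) : packingSup (· ^ p) F δ ≤ ENNReal.ofReal (δ ^ p) := by
  refine packingSup_le_iff.2 fun s c r hpack hdisj => ?_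
  have hs : s.Subsingleton := fun n hn n' hn' => by
    by_contra hne
    refine Set.disjoint_left.1 (hdisj hn hn' hne)
      (Metric.mem_closedBall_self (hpack n hn).2.1.le) ?_
    rw [hF (hpack n hn).1 (hpack n' hn').1]
    exact Metric.mem_closedBall_self (hpack n' hn').2.1.le
  rcases hs.eq_empty_or_singleton with rfl | ⟨n, rfl⟩
  · simp
  · obtain ⟨-, hr, hrδ⟩ := hpack n rfl
    rw [tsum_singleton (f := fun n => ENNReal.ofReal ((2 * r n) ^ p))]
    gcongr

theorem packingMeasure_rpow_eq_zero_of_subsingleton (hp : 0 < p) {F : Set K}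
    (hF : F.Subsingleton) : packingMeasure (· ^ p) F = 0 := by
  refine le_antisymm ((packingMeasure_le_packingPre F).trans ?_) zero_le
  refine ENNReal.le_of_forall_pos_le_add fun ε hε _ => ?_
  have hδ : 0 < (ε : ℝ) ^ p⁻¹ := by positivity
  calc packingPre (· ^ p) F ≤ packingSup (· ^ p) F ((ε : ℝ) ^ p⁻¹) :=
        packingPre_le_packingSup F hδ
    _ ≤ ENNReal.ofReal (((ε : ℝ) ^ p⁻¹) ^ p) :=
        packingSup_rpow_le_of_subsingleton hp.le hF _
    _ = 0 + ε := by
        rw [Real.rpow_inv_rpow ε.coe_nonneg hp.ne', ENNReal.ofReal_coe_nnreal, zero_add]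

theorem packingMeasure_rpow_image_le (hp : 0 < p) {φ : K → K} {L : ℝ} (hL : 0 ≤ L)
    (hφ : ∀ x y, dist (φ x) (φ y) ≤ L * dist x y) (A : Set K) :
    packingMeasure (· ^ p) (φ '' A) ≤ ENNReal.ofReal (L ^ p) * packingMeasure (· ^ p) A := by
  rcases hL.eq_or_lt with rfl | hL
  · have hA : (φ '' A).Subsingleton := by
      rintro _ ⟨x, -, rfl⟩ _ ⟨y, -, rfl⟩
      simpa using hφ x y
    simp [packingMeasure_rpow_eq_zero_of_subsingleton hp hA]
  · exact packingMeasure_rpow_image_le_of_pos hL hφ A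

end Packing

section Attractor

variable {X : Type*} {N : ℕ} {m : Fin N → ℕ} {S : ∀ i, Fin (m i) → X → X}

theorem levelSets_univ_succ_subset (ω : ℕ → Fin N) (k : ℕ) :
    levelSets m S Set.univ ω (k + 1) ⊆ levelSets m S Set.univ ω k := by
  induction k generalizing ω with
  | zero => exact Set.subset_univ _
  | succ k ih => exact Set.iUnion_mono fun j => Set.image_mono (ih _)

theorem antitone_levelSets_univ (ω : ℕ → Fin N) : Antitone (levelSets m S Set.univ ω) :=
  antitone_nat_of_succ_le (levelSets_univ_succ_subset ω)

theorem attractorOf_univ_eq_iUnion_image (hS : ∀ i j, (S i j).Injective) (ω : ℕ → Fin N) :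
    attractorOf m S Set.univ ω =
      ⋃ j, S (ω 0) j '' attractorOf m S Set.univ (fun n => ω (n + 1)) := by
  have hanti := antitone_levelSets_univ (m := m) (S := S) (fun n => ω (n + 1))
  calc attractorOf m S Set.univ ω = ⋂ k, levelSets m S Set.univ ω (k + 1) :=
        ((antitone_levelSets_univ ω).iInter_nat_add 1).symm
    _ = ⋂ k, ⋃ j, S (ω 0) j '' levelSets m S Set.univ (fun n => ω (n + 1)) k := rfl
    _ = ⋃ j, ⋂ k, S (ω 0) j '' levelSets m S Set.univ (fun n => ω (n + 1)) k :=
        Set.iInter_iUnion_of_antitone fun j _ _ hkl => Set.image_mono (hanti hkl)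
    _ = ⋃ j, S (ω 0) j '' attractorOf m S Set.univ (fun n => ω (n + 1)) :=
        Set.iUnion_congr fun j => ((hS _ j).injOn.image_iInter_eq).symm

theorem attractorOf_univ_subset_iUnion_wordMap_image (hS : ∀ i j, (S i j).Injective) (k : ℕ)
    (ω : ℕ → Fin N) :
    attractorOf m S Set.univ ω ⊆
      ⋃ j, wordMap m S ω k j '' attractorOf m S Set.univ (fun n => ω (n + k)) := by
  induction k generalizing ω with
  | zero => exact fun x hx => Set.mem_iUnion.2 ⟨fun l => l.elim0, x, hx, rfl⟩
  | succ k ih =>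
    intro x hx
    rw [attractorOf_univ_eq_iUnion_image hS] at hx
    obtain ⟨j₀, y, hy, rfl⟩ := Set.mem_iUnion.1 hx
    obtain ⟨j, z, hz, rfl⟩ := Set.mem_iUnion.1 (ih _ hy)
    exact Set.mem_iUnion.2 ⟨Fin.cons j₀ j, z, hz, rfl⟩

theorem lipschitzWith_one_wordMap [PseudoEMetricSpace X] (hS : ∀ i j, LipschitzWith 1 (S i j))
    (ω : ℕ → Fin N) (k : ℕ) (j : ∀ l : Fin k, Fin (m (ω l))) :
    LipschitzWith 1 (wordMap m S ω k j) := by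
  induction k generalizing ω with
  | zero => exact LipschitzWith.id
  | succ k ih => exact mul_one (1 : ℝ≥0) ▸ (hS _ _).comp (ih _ _)

theorem sum_wordMap_succ {α : Type*} [AddCommMonoid α] (f : (X → X) → α) (ω : ℕ → Fin N)
    (k : ℕ) :
    ∑ j : (∀ l : Fin (k + 1), Fin (m (ω l))), f (wordMap m S ω (k + 1) j) =
      ∑ j₀ : Fin (m (ω 0)), ∑ j : (∀ l : Fin k, Fin (m (ω (l + 1)))),
        f (S (ω 0) j₀ ∘ wordMap m S (fun n => ω (n + 1)) k j) := by
  rw [← (Fin.consEquiv fun l : Fin (k + 1) => Fin (m (ω l))).sum_comp, Fintype.sum_prod_type]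
  rfl

theorem sum_wordMap_congr {α : Type*} [AddCommMonoid α] (f : (X → X) → α) {k : ℕ}
    {ω ω' : ℕ → Fin N} (h : ∀ l < k, ω l = ω' l) :
    ∑ j : (∀ l : Fin k, Fin (m (ω l))), f (wordMap m S ω k j) =
      ∑ j : (∀ l : Fin k, Fin (m (ω' l))), f (wordMap m S ω' k j) := by
  induction k generalizing ω ω' f with
  | zero => simp [wordMap]
  | succ k ih =>
    rw [sum_wordMap_succ, sum_wordMap_succ]
    calc _ = ∑ j₀ : Fin (m (ω 0)), ∑ j : (∀ l : Fin k, Fin (m (ω' (l + 1)))),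
          f (S (ω 0) j₀ ∘ wordMap m S (fun n => ω' (n + 1)) k j) :=
        Finset.sum_congr rfl fun j₀ _ =>
          ih (fun φ => f (S (ω 0) j₀ ∘ φ)) fun l hl => h (l + 1) (by omega)
      _ = _ := by rw [h 0 k.succ_pos]

end Attractor

section WordSum

variable {K : Type*} [MetricSpace K] {N : ℕ} {m : Fin N → ℕ}
  {S : ∀ i, Fin (m i) → K → K} {p : ℝ}

noncomputable def wordSum (m : Fin N → ℕ) (S : ∀ i, Fin (m i) → K → K) (p : ℝ)
    (ω : ℕ → Fin N) (k : ℕ) : ℝ≥0∞ :=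
  ∑ j : (∀ l : Fin k, Fin (m (ω l))), ENNReal.ofReal (lipPlus (wordMap m S ω k j) ^ p)

theorem wordSum_eq_ofReal (ω : ℕ → Fin N) (k : ℕ) :
    wordSum m S p ω k =
      ENNReal.ofReal (∑ j : (∀ l : Fin k, Fin (m (ω l))), lipPlus (wordMap m S ω k j) ^ p) :=
  (ENNReal.ofReal_sum_of_nonneg fun _ _ => Real.rpow_nonneg (lipPlus_nonneg _) p).symm

theorem wordSum_ne_top (ω : ℕ → Fin N) (k : ℕ) : wordSum m S p ω k ≠ ⊤ :=
  ENNReal.sum_ne_top.2 fun _ _ => ENNReal.ofReal_ne_top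

theorem wordSum_dependsOn (k : ℕ) : DependsOn (wordSum m S p · k) (Set.Iio k) :=
  fun _ _ h => sum_wordMap_congr (fun φ => ENNReal.ofReal (lipPlus φ ^ p)) h

theorem packingMeasure_attractorOf_le (hS : ∀ i j, IsBiLipContraction (S i j)) (hp : 0 < p)
    (ω : ℕ → Fin N) (k : ℕ) :
    packingMeasure (· ^ p) (attractorOf m S Set.univ ω) ≤
      wordSum m S p ω k *
        packingMeasure (· ^ p) (attractorOf m S Set.univ (fun n => ω (n + k))) := by
  set F := attractorOf m S Set.univ (fun n => ω (n + k))
  calc packingMeasure (· ^ p) (attractorOf m S Set.univ ω)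
      ≤ packingMeasure (· ^ p) (⋃ j, wordMap m S ω k j '' F) :=
        packingMeasure_mono <|
          attractorOf_univ_subset_iUnion_wordMap_image (fun i j => (hS i j).injective) k ω
    _ ≤ ∑ j, packingMeasure (· ^ p) (wordMap m S ω k j '' F) := packingMeasure_iUnion_le _
    _ ≤ ∑ j, ENNReal.ofReal (lipPlus (wordMap m S ω k j) ^ p) * packingMeasure (· ^ p) F :=
        Finset.sum_le_sum fun j _ => packingMeasure_rpow_image_le hp (lipPlus_nonneg _)
          (lipschitzWith_one_wordMap (fun i j => (hS i j).lipschitzWith_one) ω k j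
            |>.dist_le_lipPlus_mul) F
    _ = wordSum m S p ω k * packingMeasure (· ^ p) F := (Finset.sum_mul _ _ _).symm

end WordSum

section Residual

variable {α : Type*} [TopologicalSpace α] {w : (ℕ → α) → ℕ → ℝ≥0∞} {v : ℕ → α} {M : ℝ≥0∞}

theorem isOpen_setOf_exists_mul_lt [DiscreteTopology α]
    (hw_dep : ∀ n, DependsOn (w · n) (Set.Iio n)) (ε : ℝ≥0∞) :
    IsOpen {ω | ∃ n k, (∀ l < k, ω (l + n) = v l) ∧ w ω n * w v k * M < ε} := by
  refine isOpen_iff_mem_nhds.2 fun ω ⟨n, k, hωv, hlt⟩ => ?_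
  refine Filter.mem_of_superset ((PiNat.isOpen_cylinder _ ω (n + k)).mem_nhds
    (PiNat.self_mem_cylinder ω _)) fun ω' hω' => ⟨n, k, fun l hl => ?_, ?_⟩
  · rw [hω' (l + n) (by omega)]
    exact hωv l hl
  · have hwn : w ω' n = w ω n :=
      hw_dep n fun l hl => hω' l (by rw [Set.mem_Iio] at hl; omega)
    rwa [hwn]

theorem dense_setOf_exists_mul_lt (hM : M ≠ ⊤) (hw_top : ∀ ω n, w ω n ≠ ⊤)
    (hv : Tendsto (w v) atTop (𝓝 0)) {ε : ℝ≥0∞} (hε : 0 < ε) :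
    Dense {ω | ∃ n k, (∀ l < k, ω (l + n) = v l) ∧ w ω n * w v k * M < ε} := by
  intro ω₀
  set splice : ℕ → ℕ → α := fun n l => if l < n then ω₀ l else v (l - n)
  refine mem_closure_of_tendsto (f := splice) (b := atTop) ?_
    (Eventually.of_forall fun n => ?_)
  · exact tendsto_pi_nhds.2 fun l => tendsto_const_nhds.congr'
      ((eventually_gt_atTop l).mono fun n hn => (if_pos hn).symm)
  · have hsmall := ENNReal.Tendsto.mul_const hv
      (Or.inr (ENNReal.mul_ne_top (hw_top (splice n) n) hM))
    rw [zero_mul] at hsmall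
    obtain ⟨k, hk⟩ := (hsmall.eventually (gt_mem_nhds hε)).exists
    refine ⟨n, k, fun l _ => by simp [splice], ?_⟩
    calc w (splice n) n * w v k * M = w v k * (w (splice n) n * M) := by ring
      _ < ε := hk

theorem residual_setOf_eq_zero_of_le_mul_shift [DiscreteTopology α] {T : (ℕ → α) → ℝ≥0∞}
    (hM : M ≠ ⊤)
    (hTM : ∀ ω, T ω ≤ M) (hw_top : ∀ ω n, w ω n ≠ ⊤)
    (hw_dep : ∀ n, DependsOn (w · n) (Set.Iio n))
    (hTw : ∀ ω n, T ω ≤ w ω n * T (fun l => ω (l + n))) (hv : Tendsto (w v) atTop (𝓝 0)) :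
    {ω | T ω = 0} ∈ residual (ℕ → α) := by
  set G : ℝ≥0∞ → Set (ℕ → α) := fun ε =>
    {ω | ∃ n k, (∀ l < k, ω (l + n) = v l) ∧ w ω n * w v k * M < ε}
  have hG_lt : ∀ ε, ∀ ω ∈ G ε, T ω < ε := by
    rintro ε ω ⟨n, k, hωv, hlt⟩
    have hwk : w (fun l => ω (l + n)) k = w v k := hw_dep k hωv
    have hshift : T (fun l => ω (l + n)) ≤ w v k * M :=
      calc T (fun l => ω (l + n))
          ≤ w (fun l => ω (l + n)) k * T (fun l => ω (l + k + n)) := hTw _ k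
        _ ≤ w v k * M := by rw [hwk]; gcongr; exact hTM _
    calc T ω ≤ w ω n * T (fun l => ω (l + n)) := hTw ω n
      _ ≤ w ω n * (w v k * M) := by gcongr
      _ = w ω n * w v k * M := (mul_assoc _ _ _).symm
      _ < ε := hlt
  have hzero : ⋂ q : ℕ, G (q : ℝ≥0∞)⁻¹ ⊆ {ω | T ω = 0} := by
    intro ω hω
    by_contra hT
    obtain ⟨q, hq⟩ := ENNReal.exists_inv_nat_lt hT
    exact (hG_lt _ ω (Set.mem_iInter.1 hω q)).not_gt hq
  exact Filter.mem_of_superset (countable_iInter_mem.2 fun q => residual_of_dense_open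
    (isOpen_setOf_exists_mul_lt hw_dep _) (dense_setOf_exists_mul_lt hM hw_top hv (by simp)))
    hzero

end Residual

theorem ne_zero_of_tendsto_sum_rpow {ι : ℕ → Type*} [∀ k, Fintype (ι k)]
    [∀ k, Nonempty (ι k)] {f : ∀ k, ι k → ℝ} {p : ℝ}
    (h : Tendsto (fun k => ∑ j, f k j ^ p) atTop (𝓝 0)) : p ≠ 0 := by
  rintro rfl
  simp only [Real.rpow_zero, Finset.sum_const, Finset.card_univ, nsmul_eq_mul, mul_one] at h
  obtain ⟨k, hk⟩ := (h.eventually (gt_mem_nhds one_pos)).exists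
  exact hk.not_ge (by exact_mod_cast Fintype.card_pos)

theorem typical_packing_eq_zero_general {K : Type*} [MetricSpace K]
    {N : ℕ} (m : Fin N → ℕ) (hm : ∀ i, 0 < m i)
    (S : ∀ i, Fin (m i) → K → K) (hS : ∀ i j, IsBiLipContraction (S i j))
    (p : ℝ) (hp0 : 0 ≤ p)
    (v : ℕ → Fin N)
    (hv : Filter.Tendsto
      (fun k : ℕ => ∑ j : (∀ l : Fin k, Fin (m (v l))), lipPlus (wordMap m S v k j) ^ p)
      Filter.atTop (nhds 0))
    (hfin : (⨆ u : ℕ → Fin N, packingMeasure (fun t => t ^ p) (attractorOf m S Set.univ u)) < ⊤) :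
    {ω : ℕ → Fin N | packingMeasure (fun t => t ^ p) (attractorOf m S Set.univ ω) = 0} ∈
      residual (ℕ → Fin N) := by
  have : ∀ k, Nonempty (∀ l : Fin k, Fin (m (v l))) := fun k => ⟨fun l => ⟨0, hm _⟩⟩
  have hp : 0 < p := hp0.lt_of_ne' (ne_zero_of_tendsto_sum_rpow hv)
  have hv' : Tendsto (wordSum m S p v) atTop (𝓝 0) := by
    simpa only [← wordSum_eq_ofReal, ENNReal.ofReal_zero] using ENNReal.tendsto_ofReal hv
  exact residual_setOf_eq_zero_of_le_mul_shift hfin.ne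
    (le_iSup fun u => packingMeasure _ (attractorOf m S Set.univ u)) wordSum_ne_top
    wordSum_dependsOn (packingMeasure_attractorOf_le hS hp) hv'

/-- If `p = sup_u dim_P F_u`, some `v ∈ Ω` satisfies
`∑_{words of length k} Lip⁺(S_{v₁,j₁} ∘ ⋯ ∘ S_{v_k,j_k})^p → 0`, and
`sup_u 𝒫^p(F_u) < ∞`, then the set of `ω` with `𝒫^p(F_ω) = 0` is residual. -/
theorem typical_packing_eq_zero {K : Type*} [MetricSpace K] [CompactSpace K] [Nonempty K]
    {N : ℕ} (hN : 0 < N) (m : Fin N → ℕ) (hm : ∀ i, 0 < m i)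
    (S : ∀ i, Fin (m i) → K → K) (hS : ∀ i j, IsBiLipContraction (S i j))
    (p : ℝ) (hp0 : 0 ≤ p)
    (hp : ENNReal.ofReal p = ⨆ u : ℕ → Fin N, packingDim (attractorOf m S Set.univ u))
    (v : ℕ → Fin N)
    (hv : Filter.Tendsto
      (fun k : ℕ => ∑ j : (∀ l : Fin k, Fin (m (v l))), lipPlus (wordMap m S v k j) ^ p)
      Filter.atTop (nhds 0))
    (hfin : (⨆ u : ℕ → Fin N, packingMeasure (fun t => t ^ p) (attractorOf m S Set.univ u)) < ⊤) :
    {ω : ℕ → Fin N | packingMeasure (fun t => t ^ p) (attractorOf m S Set.univ ω) = 0} ∈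
      residual (ℕ → Fin N) :=
  typical_packing_eq_zero_general m hm S hS p hp0 v hv hfin
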